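/- The class of linearly ordered posets — structures (P, ≺, <) where ≺ is a partial order and < is a linear order extending ≺ — has the amalgamation property (with respect to embeddings preserving both orders): given such structures (A,≺_A,<_A), (B,≺_B,<_B), (C,≺_C,<_C) and embeddings f : A → B, g : A → C, there exists a structure (D,≺_D,<_D) in the class and embeddings k : B → D, l : C → D with k ∘ f = l ∘ g, where ≺_D is the transitive closure of the union of the images of ≺_B and ≺_C on the amalgamated set, and <_D is a linear order extending ≺_D as well as the images of <_B and <_C. -/

import Mathlib

/-!
Every element of the amalgamated set `D` comes from `B` or from `C`, and a chain of steps of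
`≺_B` and `≺_C` in `D` can only switch sides at a point of `A`, where `f a` is glued to `g a`.
Since `≺_B` and `≺_C` are transitive and agree on `A`, such a chain starting and ending in `B`
collapses to a single `≺_B`-step. Hence the transitive closure restricts to `≺_B` on `B` (and to
`≺_C` on `C`), which makes it irreflexive. The same argument applied to `<_B` and `<_C` gives a
strict partial order on `D`, and any linear extension of it serves as `<_D`; it extends `≺_D`
because `≺_B ⊆ <_B` and `≺_C ⊆ <_C`, and it restricts to `<_B` on `B` because `<_B` is total.
-/

universe u v w

/-- The relation on the disjoint union of `β` and `γ` identifying `f a` with `g a` for `a : α`. -/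
def amalgRel {α : Type u} {β : Type v} {γ : Type w} (f : α → β) (g : α → γ) :
    β ⊕ γ → β ⊕ γ → Prop := fun x y =>
  x = y ∨ (∃ a, x = Sum.inl (f a) ∧ y = Sum.inr (g a)) ∨
    (∃ a, x = Sum.inr (g a) ∧ y = Sum.inl (f a))

/-- The amalgamated set: the quotient of the disjoint union of `β` and `γ` identifying
`f a` with `g a` for each `a : α`. -/
def Amalg {α : Type u} {β : Type v} {γ : Type w} (f : α → β) (g : α → γ) :
    Type (max v w) := Quot (amalgRel f g)

/-- The canonical map `β → Amalg f g`. -/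
def amalgInl {α : Type u} {β : Type v} {γ : Type w} (f : α → β) (g : α → γ) (b : β) :
    Amalg f g := Quot.mk _ (Sum.inl b)

/-- The canonical map `γ → Amalg f g`. -/
def amalgInr {α : Type u} {β : Type v} {γ : Type w} (f : α → β) (g : α → γ) (c : γ) :
    Amalg f g := Quot.mk _ (Sum.inr c)

/-- The relation on the amalgamated set induced by relations on `β` and on `γ`. -/
def amalgOrd {α : Type u} {β : Type v} {γ : Type w} (f : α → β) (g : α → γ)
    (pB : β → β → Prop) (pC : γ → γ → Prop) : Amalg f g → Amalg f g → Prop := fun x y =>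
  (∃ b b', x = amalgInl f g b ∧ y = amalgInl f g b' ∧ pB b b') ∨
    (∃ c c', x = amalgInr f g c ∧ y = amalgInr f g c' ∧ pC c c')

open Relation Function

theorem exists_isStrictTotalOrder_extension {D : Type*} (R : D → D → Prop) [IsStrictOrder D R] :
    ∃ s : D → D → Prop, IsStrictTotalOrder D s ∧ ∀ x y, R x y → s x y := by
  let := partialOrderOfSO R
  exact ⟨(· < · : LinearExtension D → LinearExtension D → Prop),
    (inferInstance : IsStrictTotalOrder (LinearExtension D) (· < ·)),
    fun x y h => (toLinearExtension (α := D)).monotone.strictMono_of_injective (fun _ _ h => h) h⟩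

section Amalgamation

variable {α : Type u} {β : Type v} {γ : Type w}

/-- The elements above `amalgInl f g b` in the transitive closure of `amalgOrd f g sB sC`,
described explicitly: a chain from `b` into `γ` crosses over at a glued pair `f a ≡ g a`, and at
least one of its two legs is strict. -/
def amalgAboveInl (f : α → β) (g : α → γ) (sB : β → β → Prop) (sC : γ → γ → Prop) (b : β) :
    Set (Amalg f g) :=
  {y | (∀ b', y = amalgInl f g b' → sB b b') ∧
    ∀ c, y = amalgInr f g c → ∃ a, (ReflGen sB b (f a) ∧ sC (g a) c) ∨ (sB b (f a) ∧ g a = c)}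

variable {f : α → β} {g : α → γ} {sB : β → β → Prop} {sC : γ → γ → Prop}

@[elab_as_elim]
theorem Amalg.ind {motive : Amalg f g → Prop} (inl : ∀ b, motive (amalgInl f g b))
    (inr : ∀ c, motive (amalgInr f g c)) (x : Amalg f g) : motive x :=
  Quot.ind (Sum.rec inl inr) x

theorem amalgInl_apply_eq_amalgInr_apply (a : α) : amalgInl f g (f a) = amalgInr f g (g a) :=
  Quot.sound (Or.inr (Or.inl ⟨a, rfl, rfl⟩))

theorem amalgRel_equivalence (hf : Injective f) (hg : Injective g) :
    Equivalence (amalgRel f g) where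
  refl _ := Or.inl rfl
  symm := by
    rintro x y (rfl | ⟨a, rfl, rfl⟩ | ⟨a, rfl, rfl⟩)
    exacts [Or.inl rfl, Or.inr (Or.inr ⟨a, rfl, rfl⟩), Or.inr (Or.inl ⟨a, rfl, rfl⟩)]
  trans := by
    rintro x y z (rfl | ⟨a, rfl, rfl⟩ | ⟨a, rfl, rfl⟩) h
    · exact h
    · rcases h with rfl | ⟨_, h, -⟩ | ⟨a', h, rfl⟩
      · exact Or.inr (Or.inl ⟨a, rfl, rfl⟩)
      · cases h
      · rw [hg (Sum.inr.inj h)]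
        exact Or.inl rfl
    · rcases h with rfl | ⟨a', h, rfl⟩ | ⟨_, h, -⟩
      · exact Or.inr (Or.inr ⟨a, rfl, rfl⟩)
      · rw [hf (Sum.inl.inj h)]
        exact Or.inl rfl
      · cases h

theorem amalgRel_of_mk_eq_mk (hf : Injective f) (hg : Injective g) {x y : β ⊕ γ}
    (h : Quot.mk (amalgRel f g) x = Quot.mk _ y) : amalgRel f g x y :=
  (amalgRel_equivalence hf hg).eqvGen_iff.mp (Quot.eqvGen_exact h)

theorem amalgInl_injective (hf : Injective f) (hg : Injective g) : Injective (amalgInl f g) := by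
  intro b b' h
  rcases amalgRel_of_mk_eq_mk hf hg h with h | ⟨_, -, ⟨⟩⟩ | ⟨_, ⟨⟩, -⟩
  exact Sum.inl.inj h

theorem amalgInl_eq_amalgInr_iff (hf : Injective f) (hg : Injective g) {b : β} {c : γ} :
    amalgInl f g b = amalgInr f g c ↔ ∃ a, f a = b ∧ g a = c := by
  refine ⟨fun h => ?_, fun ⟨a, hb, hc⟩ => hb ▸ hc ▸ amalgInl_apply_eq_amalgInr_apply a⟩
  rcases amalgRel_of_mk_eq_mk hf hg h with h | ⟨a, hb, hc⟩ | ⟨_, ⟨⟩, -⟩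
  · cases h
  · exact ⟨a, (Sum.inl.inj hb).symm, (Sum.inr.inj hc).symm⟩

def Amalg.swap : Amalg f g → Amalg g f :=
  Quot.map Sum.swap fun _ _ h => by
    rcases h with rfl | ⟨a, rfl, rfl⟩ | ⟨a, rfl, rfl⟩
    exacts [Or.inl rfl, Or.inr (Or.inr ⟨a, rfl, rfl⟩), Or.inr (Or.inl ⟨a, rfl, rfl⟩)]

theorem amalgInr_injective (hf : Injective f) (hg : Injective g) : Injective (amalgInr f g) :=
  fun _ _ h => amalgInl_injective hg hf (congrArg Amalg.swap h)

theorem amalgOrd_swap {x y : Amalg f g} (h : amalgOrd f g sB sC x y) :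
    amalgOrd g f sC sB x.swap y.swap := by
  rcases h with ⟨b, b', rfl, rfl, h⟩ | ⟨c, c', rfl, rfl, h⟩
  exacts [Or.inr ⟨b, b', rfl, rfl, h⟩, Or.inl ⟨c, c', rfl, rfl, h⟩]

theorem amalgOrd_mono {tB : β → β → Prop} {tC : γ → γ → Prop} (hB : sB ≤ tB) (hC : sC ≤ tC) :
    amalgOrd f g sB sC ≤ amalgOrd f g tB tC := by
  rintro x y (⟨b, b', hx, hy, h⟩ | ⟨c, c', hx, hy, h⟩)
  exacts [Or.inl ⟨b, b', hx, hy, hB _ _ h⟩, Or.inr ⟨c, c', hx, hy, hC _ _ h⟩]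

theorem mem_amalgAboveInl_of_amalgOrd_amalgInl (hf : Injective f) (hg : Injective g)
    (hBC : ∀ a a', sB (f a) (f a') ↔ sC (g a) (g a')) {b : β} {y : Amalg f g}
    (h : amalgOrd f g sB sC (amalgInl f g b) y) : y ∈ amalgAboveInl f g sB sC b := by
  rcases h with ⟨b₀, b₁, hb, rfl, h⟩ | ⟨c₀, c₁, hb, rfl, h⟩
  · obtain rfl := amalgInl_injective hf hg hb
    refine ⟨fun b' hb' => amalgInl_injective hf hg hb' ▸ h, fun c hc => ?_⟩
    obtain ⟨a, rfl, rfl⟩ := (amalgInl_eq_amalgInr_iff hf hg).mp hc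
    exact ⟨a, Or.inr ⟨h, rfl⟩⟩
  · obtain ⟨a, rfl, rfl⟩ := (amalgInl_eq_amalgInr_iff hf hg).mp hb
    refine ⟨fun b' hb' => ?_, fun c hc => ⟨a, Or.inl ⟨.refl, amalgInr_injective hf hg hc ▸ h⟩⟩⟩
    obtain ⟨a', rfl, rfl⟩ := (amalgInl_eq_amalgInr_iff hf hg).mp hb'.symm
    exact (hBC a a').mpr h

theorem mem_amalgAboveInl_of_amalgOrd [IsTrans β sB] [IsTrans γ sC] (hf : Injective f)
    (hg : Injective g) (hBC : ∀ a a', sB (f a) (f a') ↔ sC (g a) (g a')) {b : β}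
    {y z : Amalg f g} (hy : y ∈ amalgAboveInl f g sB sC b) (h : amalgOrd f g sB sC y z) :
    z ∈ amalgAboveInl f g sB sC b := by
  obtain ⟨hyB, hyC⟩ := hy
  rcases h with ⟨b₀, b₁, rfl, rfl, h⟩ | ⟨c₀, c₁, rfl, rfl, h⟩
  · have hb₁ := _root_.trans (hyB b₀ rfl) h
    refine ⟨fun b' hb' => amalgInl_injective hf hg hb' ▸ hb₁, fun c hc => ?_⟩
    obtain ⟨a, rfl, rfl⟩ := (amalgInl_eq_amalgInr_iff hf hg).mp hc
    exact ⟨a, Or.inr ⟨hb₁, rfl⟩⟩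
  · obtain ⟨a, hba, hac⟩ : ∃ a, ReflGen sB b (f a) ∧ sC (g a) c₁ := by
      obtain ⟨a, ⟨hba, hac⟩ | ⟨hba, rfl⟩⟩ := hyC c₀ rfl
      exacts [⟨a, hba, _root_.trans hac h⟩, ⟨a, .single hba, h⟩]
    refine ⟨fun b' hb' => ?_, fun c hc => ⟨a, Or.inl ⟨hba, amalgInr_injective hf hg hc ▸ hac⟩⟩⟩
    obtain ⟨a', rfl, rfl⟩ := (amalgInl_eq_amalgInr_iff hf hg).mp hb'.symm
    rcases hba with _ | hba
    exacts [(hBC _ a').mpr hac, _root_.trans hba ((hBC a a').mpr hac)]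

theorem transGen_amalgOrd_amalgInl_iff [IsTrans β sB] [IsTrans γ sC] (hf : Injective f)
    (hg : Injective g) (hBC : ∀ a a', sB (f a) (f a') ↔ sC (g a) (g a')) {b b' : β} :
    TransGen (amalgOrd f g sB sC) (amalgInl f g b) (amalgInl f g b') ↔ sB b b' := by
  refine ⟨fun h => ?_, fun h => .single (Or.inl ⟨b, b', rfl, rfl, h⟩)⟩
  suffices ∀ y, TransGen (amalgOrd f g sB sC) (amalgInl f g b) y → y ∈ amalgAboveInl f g sB sC b
    from (this _ h).1 b' rfl
  intro y h
  induction h with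
  | single h => exact mem_amalgAboveInl_of_amalgOrd_amalgInl hf hg hBC h
  | tail _ h ih => exact mem_amalgAboveInl_of_amalgOrd hf hg hBC ih h

theorem transGen_amalgOrd_amalgInr_iff [IsTrans β sB] [IsTrans γ sC] (hf : Injective f)
    (hg : Injective g) (hBC : ∀ a a', sB (f a) (f a') ↔ sC (g a) (g a')) {c c' : γ} :
    TransGen (amalgOrd f g sB sC) (amalgInr f g c) (amalgInr f g c') ↔ sC c c' := by
  refine ⟨fun h => ?_, fun h => .single (Or.inr ⟨c, c', rfl, rfl, h⟩)⟩
  exact (transGen_amalgOrd_amalgInl_iff hg hf fun a a' => (hBC a a').symm).mp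
    (h.lift Amalg.swap fun _ _ => amalgOrd_swap)

theorem isStrictOrder_transGen_amalgOrd [IsStrictOrder β sB] [IsStrictOrder γ sC]
    (hf : Injective f) (hg : Injective g) (hBC : ∀ a a', sB (f a) (f a') ↔ sC (g a) (g a')) :
    IsStrictOrder (Amalg f g) (TransGen (amalgOrd f g sB sC)) where
  irrefl x := by
    induction x using Amalg.ind with
    | inl b => exact fun h => irrefl b ((transGen_amalgOrd_amalgInl_iff hf hg hBC).mp h)
    | inr c => exact fun h => irrefl c ((transGen_amalgOrd_amalgInr_iff hf hg hBC).mp h)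
  trans _ _ _ := TransGen.trans

end Amalgamation

theorem orderedPoset_amalgamation_general {α : Type u} {β : Type v} {γ : Type w}
    (pA : α → α → Prop) (ltA : α → α → Prop)
    (pB : β → β → Prop) (ltB : β → β → Prop)
    (hB : Irreflexive pB ∧ Transitive pB) (hlB : IsStrictTotalOrder β ltB)
    (hextB : ∀ x y : β, pB x y → ltB x y)
    (pC : γ → γ → Prop) (ltC : γ → γ → Prop)
    (hC : Irreflexive pC ∧ Transitive pC) (hlC : IsStrictTotalOrder γ ltC)
    (hextC : ∀ x y : γ, pC x y → ltC x y)
    (f : α → β) (hf : Function.Injective f) (hfp : ∀ x y : α, pA x y ↔ pB (f x) (f y))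
    (hfl : ∀ x y : α, ltA x y ↔ ltB (f x) (f y))
    (g : α → γ) (hg : Function.Injective g) (hgp : ∀ x y : α, pA x y ↔ pC (g x) (g y))
    (hgl : ∀ x y : α, ltA x y ↔ ltC (g x) (g y)) :
    Irreflexive (Relation.TransGen (amalgOrd f g pB pC)) ∧
    Transitive (Relation.TransGen (amalgOrd f g pB pC)) ∧
    Function.Injective (amalgInl f g) ∧
    (∀ b b' : β, pB b b' ↔
      Relation.TransGen (amalgOrd f g pB pC) (amalgInl f g b) (amalgInl f g b')) ∧
    Function.Injective (amalgInr f g) ∧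
    (∀ c c' : γ, pC c c' ↔
      Relation.TransGen (amalgOrd f g pB pC) (amalgInr f g c) (amalgInr f g c')) ∧
    (∀ a : α, amalgInl f g (f a) = amalgInr f g (g a)) ∧
    ∃ ltD : Amalg f g → Amalg f g → Prop, IsStrictTotalOrder (Amalg f g) ltD ∧
      (∀ x y : Amalg f g, Relation.TransGen (amalgOrd f g pB pC) x y → ltD x y) ∧
      (∀ b b' : β, ltB b b' ↔ ltD (amalgInl f g b) (amalgInl f g b')) ∧
      (∀ c c' : γ, ltC c c' ↔ ltD (amalgInr f g c) (amalgInr f g c')) := by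
  have : IsStrictOrder β pB := { irrefl := hB.1, trans := fun _ _ _ => @hB.2 _ _ _ }
  have : IsStrictOrder γ pC := { irrefl := hC.1, trans := fun _ _ _ => @hC.2 _ _ _ }
  have hpBC a a' : pB (f a) (f a') ↔ pC (g a) (g a') := (hfp a a').symm.trans (hgp a a')
  have hltBC a a' : ltB (f a) (f a') ↔ ltC (g a) (g a') := (hfl a a').symm.trans (hgl a a')
  have := isStrictOrder_transGen_amalgOrd hf hg hpBC
  have := isStrictOrder_transGen_amalgOrd hf hg hltBC
  obtain ⟨ltD, hltD, hextD⟩ :=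
    exists_isStrictTotalOrder_extension (TransGen (amalgOrd f g ltB ltC))
  have hinl b b' : ltB b b' ↔ ltD (amalgInl f g b) (amalgInl f g b') :=
    (RelEmbedding.ofMonotone (amalgInl f g) fun b b' h =>
      hextD _ _ (.single (Or.inl ⟨b, b', rfl, rfl, h⟩))).map_rel_iff.symm
  have hinr c c' : ltC c c' ↔ ltD (amalgInr f g c) (amalgInr f g c') :=
    (RelEmbedding.ofMonotone (amalgInr f g) fun c c' h =>
      hextD _ _ (.single (Or.inr ⟨c, c', rfl, rfl, h⟩))).map_rel_iff.symm
  exact ⟨irrefl, fun _ _ _ => TransGen.trans,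
    amalgInl_injective hf hg, fun _ _ => (transGen_amalgOrd_amalgInl_iff hf hg hpBC).symm,
    amalgInr_injective hf hg, fun _ _ => (transGen_amalgOrd_amalgInr_iff hf hg hpBC).symm,
    amalgInl_apply_eq_amalgInr_apply, ltD, hltD,
    fun x y h => hextD x y (TransGen.mono (amalgOrd_mono hextB hextC) x y h),
    hinl, hinr⟩

/-- The class of linearly ordered posets `(P, ≺, <)` (a strict partial order `≺` together with
a strict linear order `<` extending it) has the amalgamation property with respect to
embeddings preserving both orders: the transitive closure `≺_D` of the union of the images of
`≺_B` and `≺_C` on the amalgamated set is a strict partial order, the canonical maps are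
embeddings with `k ∘ f = l ∘ g`, and there is a strict linear order `<_D` extending `≺_D` as
well as the images of `<_B` and `<_C`. -/
theorem orderedPoset_amalgamation {α : Type u} {β : Type v} {γ : Type w}
    (pA : α → α → Prop) (ltA : α → α → Prop)
    (hA : Irreflexive pA ∧ Transitive pA) (hlA : IsStrictTotalOrder α ltA)
    (hext : ∀ x y : α, pA x y → ltA x y)
    (pB : β → β → Prop) (ltB : β → β → Prop)
    (hB : Irreflexive pB ∧ Transitive pB) (hlB : IsStrictTotalOrder β ltB)
    (hextB : ∀ x y : β, pB x y → ltB x y)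
    (pC : γ → γ → Prop) (ltC : γ → γ → Prop)
    (hC : Irreflexive pC ∧ Transitive pC) (hlC : IsStrictTotalOrder γ ltC)
    (hextC : ∀ x y : γ, pC x y → ltC x y)
    (f : α → β) (hf : Function.Injective f) (hfp : ∀ x y : α, pA x y ↔ pB (f x) (f y))
    (hfl : ∀ x y : α, ltA x y ↔ ltB (f x) (f y))
    (g : α → γ) (hg : Function.Injective g) (hgp : ∀ x y : α, pA x y ↔ pC (g x) (g y))
    (hgl : ∀ x y : α, ltA x y ↔ ltC (g x) (g y)) :
    Irreflexive (Relation.TransGen (amalgOrd f g pB pC)) ∧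
    Transitive (Relation.TransGen (amalgOrd f g pB pC)) ∧
    Function.Injective (amalgInl f g) ∧
    (∀ b b' : β, pB b b' ↔
      Relation.TransGen (amalgOrd f g pB pC) (amalgInl f g b) (amalgInl f g b')) ∧
    Function.Injective (amalgInr f g) ∧
    (∀ c c' : γ, pC c c' ↔
      Relation.TransGen (amalgOrd f g pB pC) (amalgInr f g c) (amalgInr f g c')) ∧
    (∀ a : α, amalgInl f g (f a) = amalgInr f g (g a)) ∧
    ∃ ltD : Amalg f g → Amalg f g → Prop, IsStrictTotalOrder (Amalg f g) ltD ∧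
      (∀ x y : Amalg f g, Relation.TransGen (amalgOrd f g pB pC) x y → ltD x y) ∧
      (∀ b b' : β, ltB b b' ↔ ltD (amalgInl f g b) (amalgInl f g b')) ∧
      (∀ c c' : γ, ltC c c' ↔ ltD (amalgInr f g c) (amalgInr f g c')) :=
  orderedPoset_amalgamation_general pA ltA pB ltB hB hlB hextB pC ltC hC hlC hextC f hf hfp hfl g hg
    hgp hgl
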